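/- Fix q ∈ ℝ and z₀ ∈ ℂ, and let H(z) := (q/(4π√2)) · (1 + z₀·conj z)/(z − z₀) for z ≠ z₀. Then for every z ∈ ℂ with z ≠ z₀, P(z)² · ∂̄( w ↦ P(w)^{-1} H(w) )(z) = −q/(8π). (This says the paper's electromagnetic memory solution (4.19) satisfies the Green's function equation P²∂̄(P⁻¹Δᴱᴹ) = (q/2)·δ_{S²}|_{ℓ≥1} away from the source point: away from z₀ it equals minus q/2 times the kernel 1/(4π) of the projection onto the ℓ = 0 spherical harmonic.) -/

import Mathlib

noncomputable section

/-- The Wirtinger derivative `∂̄f(z) = (1/2)(∂f/∂x + i ∂f/∂y)`. -/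
def dbar (f : ℂ → ℂ) (z : ℂ) : ℂ :=
  (1 / 2) * (deriv (fun t : ℝ => f (z + (t : ℂ))) 0
    + Complex.I * deriv (fun t : ℝ => f (z + (t : ℂ) * Complex.I)) 0)

/-- The conformal factor `P(z) = (1 + |z|²)/√2` of the round sphere metric in
stereographic coordinates. -/
def Pconf (z : ℂ) : ℝ := (1 + ‖z‖ ^ 2) / Real.sqrt 2

/-- The paper's electromagnetic memory Green's function (4.19):
`H(z) = (q/(4π√2)) (1 + z₀ z̄)/(z − z₀)`. -/
def memH (q : ℝ) (z₀ z : ℂ) : ℂ :=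
  ((q / (4 * Real.pi * Real.sqrt 2) : ℝ) : ℂ) *
    (1 + z₀ * (starRingEnd ℂ) z) / (z - z₀)

/-! Writing `P⁻¹H` as `G(z, z̄)` with `G(a, b) = c (1 + z₀ b)/((1 + a b)(a − z₀))`, `c = q/(4π)`,
holomorphic in both variables, the Wirtinger derivative `∂̄` becomes the partial derivative
`∂G/∂b`. In `b` the factor `a − z₀` is a constant, and `∂G/∂b = −c/(1 + a b)²`; the pole at `z₀`
drops out. Multiplying by `P² = (1 + z z̄)²/2` leaves `−c/2 = −q/(8π)`. -/

open ComplexConjugate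

theorem hasDerivAt_comp_line_conj {G : ℂ × ℂ → ℂ} {G' : ℂ × ℂ →L[ℂ] ℂ} {z : ℂ}
    (hG : HasFDerivAt G G' (z, conj z)) (v : ℂ) :
    HasDerivAt (fun t : ℝ => G (z + t * v, conj (z + t * v))) (G' (v, conj v)) 0 := by
  have hline : HasDerivAt (fun t : ℝ => z + t * v) v 0 := by
    simpa using ((hasDerivAt_id (0 : ℝ)).ofReal_comp.mul_const v).const_add z
  have hpath : HasDerivAt (fun t : ℝ => (z + t * v, conj (z + t * v))) (v, conj v) 0 :=
    hline.prodMk hline.star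
  have hG₀ : HasFDerivAt G G' (z + ((0 : ℝ) : ℂ) * v, conj (z + ((0 : ℝ) : ℂ) * v)) := by
    simpa using hG
  exact (hG₀.restrictScalars ℝ).comp_hasDerivAt (0 : ℝ) hpath

theorem dbar_comp_conj {G : ℂ × ℂ → ℂ} {z : ℂ} (hG : DifferentiableAt ℂ G (z, conj z)) :
    dbar (fun w => G (w, conj w)) z = deriv (fun b => G (z, b)) (conj z) := by
  have h₁ := (hasDerivAt_comp_line_conj hG.hasFDerivAt 1).deriv
  have hI := (hasDerivAt_comp_line_conj hG.hasFDerivAt Complex.I).deriv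
  simp only [mul_one] at h₁
  set G' := fderiv ℂ G (z, conj z)
  have hsnd : HasDerivAt (fun b => G (z, b)) (G' (0, 1)) (conj z) :=
    hG.hasFDerivAt.comp_hasDerivAt _ ((hasDerivAt_const _ z).prodMk (hasDerivAt_id _))
  have hlin : G' (Complex.I, -Complex.I) = Complex.I * G' (1, -1) := by
    rw [← smul_eq_mul, ← G'.map_smul]
    simp
  have hsplit : G' (1, 1) - G' (1, -1) = 2 * G' (0, 1) := by
    rw [← G'.map_sub, two_mul, ← G'.map_add]
    congr 1
    simp
  rw [dbar, h₁, hI, hsnd.deriv]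
  simp only [map_one, Complex.conj_I, hlin]
  linear_combination (1 / 2 : ℂ) * hsplit + (1 / 2 : ℂ) * G' (1, -1) * Complex.I_mul_I

def memKernel (c z₀ : ℂ) (p : ℂ × ℂ) : ℂ :=
  c * (1 + z₀ * p.2) / ((1 + p.1 * p.2) * (p.1 - z₀))

theorem differentiableAt_memKernel (c z₀ : ℂ) {a b : ℂ} (hab : 1 + a * b ≠ 0)
    (ha : a - z₀ ≠ 0) : DifferentiableAt ℂ (memKernel c z₀) (a, b) := by
  unfold memKernel
  simp_rw [div_eq_mul_inv]
  fun_prop (disch := exact mul_ne_zero hab ha)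

theorem hasDerivAt_memKernel_snd (c z₀ : ℂ) {a b : ℂ} (hab : 1 + a * b ≠ 0)
    (ha : a - z₀ ≠ 0) :
    HasDerivAt (fun b => memKernel c z₀ (a, b)) (-c / (1 + a * b) ^ 2) b := by
  have hnum : HasDerivAt (fun b => c * (1 + z₀ * b)) (c * z₀) b := by
    simpa using (((hasDerivAt_id b).const_mul z₀).const_add 1).const_mul c
  have hden : HasDerivAt (fun b => (1 + a * b) * (a - z₀)) (a * (a - z₀)) b := by
    simpa using (((hasDerivAt_id b).const_mul a).const_add 1).mul_const (a - z₀)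
  refine (hnum.div hden (mul_ne_zero hab ha)).congr_deriv ?_
  field_simp
  ring

theorem one_add_mul_conj_ne_zero (w : ℂ) : 1 + w * conj w ≠ 0 := by
  rw [Complex.mul_conj]
  exact_mod_cast (add_pos_of_pos_of_nonneg one_pos (Complex.normSq_nonneg w)).ne'

theorem ofReal_Pconf (w : ℂ) : (Pconf w : ℂ) = (1 + w * conj w) / Real.sqrt 2 := by
  rw [Pconf, Complex.mul_conj, Complex.normSq_eq_norm_sq]
  push_cast
  rfl

theorem Pconf_inv_mul_memH (q : ℝ) (z₀ w : ℂ) :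
    ((Pconf w : ℂ))⁻¹ * memH q z₀ w = memKernel ((q / (4 * Real.pi) : ℝ) : ℂ) z₀ (w, conj w) := by
  have hsqrt : (Real.sqrt 2 : ℂ) ≠ 0 := by exact_mod_cast (by positivity : Real.sqrt 2 ≠ 0)
  rw [ofReal_Pconf, memH, memKernel]
  push_cast
  simp only [div_eq_mul_inv, mul_inv, inv_inv]
  field_simp

/-- The electromagnetic memory solution (4.19) satisfies the Green's function
equation `P²∂̄(P⁻¹Δᴱᴹ) = (q/2) δ_{S²}|_{ℓ≥1}` away from the source point: for
`z ≠ z₀`, `P(z)² ∂̄(w ↦ P(w)⁻¹ H(w))(z) = −q/(8π)`. -/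
theorem memH_greens_equation_away_from_source
    (q : ℝ) (z₀ : ℂ) (z : ℂ) (hz : z ≠ z₀) :
    ((Pconf z : ℝ) : ℂ) ^ 2 *
      dbar (fun w => (((Pconf w : ℝ) : ℂ))⁻¹ * memH q z₀ w) z
    = -((q / (8 * Real.pi) : ℝ) : ℂ) := by
  have hA := one_add_mul_conj_ne_zero z
  have hd : z - z₀ ≠ 0 := sub_ne_zero.mpr hz
  rw [funext (Pconf_inv_mul_memH q z₀), dbar_comp_conj (differentiableAt_memKernel _ z₀ hA hd),
    (hasDerivAt_memKernel_snd _ z₀ hA hd).deriv, ofReal_Pconf]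
  have hsqrt : (Real.sqrt 2 : ℂ) ^ 2 = 2 := by exact_mod_cast Real.sq_sqrt zero_le_two
  have hsqrt0 : (Real.sqrt 2 : ℂ) ≠ 0 := by exact_mod_cast (by positivity : Real.sqrt 2 ≠ 0)
  push_cast
  field_simp
  rw [hsqrt]
  ring

end
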